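/- arXiv:1412.7338 — 3 statements merged into one kernel-verified Lean document; each statement's English description precedes it below -/
import Mathlib

section
/- Let k, n be positive integers with 1 ≤ k ≤ n-1, and let 0 < |a| < 1 with |b|² = 1 - |a|². Then ∑_{γ=1}^{k} (-|b|²/|a|²)^{γ-1} · (1/γ) · C(k-1, γ-1) · C(n-k-1, γ-1) = (|a|^{-2(k-1)}/k) · P^{(1, n-2k)}_{k-1}(2|a|² - 1), where P^{(ν,μ)}_m denotes the Jacobi polynomial given by P^{(ν,μ)}_m(x) = (Γ(m+ν+1)/(Γ(m+1)Γ(ν+1))) · ₂F₁(-m, m+ν+μ+1; ν+1; (1-x)/2). -/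
open Real Finset

/-- Terminating Gauss hypergeometric series ₂F₁(-m, b; c; z). -/
noncomputable def hyp2F1term (m : ℕ) (b c z : ℝ) : ℝ :=
  ∑ j ∈ Finset.range (m + 1),
    ((ascPochhammer ℝ j).eval (-(m : ℝ)) * (ascPochhammer ℝ j).eval b) /
      ((ascPochhammer ℝ j).eval c * (j.factorial : ℝ)) * z ^ j

/-- Jacobi polynomial P^{(ν,μ)}_m(x) via the hypergeometric representation. -/
noncomputable def jacobiP (ν μ : ℝ) (m : ℕ) (x : ℝ) : ℝ :=
  (Real.Gamma ((m : ℝ) + ν + 1) / (Real.Gamma ((m : ℝ) + 1) * Real.Gamma (ν + 1))) *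
    hyp2F1term m ((m : ℝ) + ν + μ + 1) (ν + 1) ((1 - x) / 2)

open scoped Nat

/-! Write `m = k - 1`, `p = n - k - 1`, `z = a²`. Since `(j + 1) C(p+1, j+1) = (p + 1) C(p, j)`, the
left side is `z⁻ᵐ / (p + 1)` times `∑ⱼ (z - 1)ʲ zᵐ⁻ʲ C(m, j) C(p+1, j+1)`. Expanding
`zᵐ⁻ʲ = (1 + (z - 1))ᵐ⁻ʲ` and collecting powers of `z - 1`, Vandermonde's identity turns this into
`∑ⱼ (z - 1)ʲ C(m, j) C(j+p+1, j+1)`, which is `(p + 1) ₂F₁(-m, p + 2; 2; 1 - z)` term by term.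
Finally `P^{(1,μ)}_m(x) = (m + 1) ₂F₁(-m, m + μ + 2; 2; (1 - x)/2)`. -/

theorem Nat.sum_range_choose_mul_choose_succ (J q : ℕ) :
    ∑ j ∈ range (J + 1), J.choose j * q.choose (j + 1) = (J + q).choose (J + 1) := by
  rw [Nat.add_choose_eq, Nat.sum_antidiagonal_eq_sum_range_succ_mk, sum_range_succ _ (J + 1),
    Nat.choose_succ_self, zero_mul, add_zero, ← sum_range_reflect]
  refine sum_congr rfl fun j hj => ?_
  have hjJ : j ≤ J := Nat.lt_succ_iff.mp (mem_range.mp hj)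
  rw [← Nat.choose_symm hjJ, show J + 1 - 1 - j = J - j by omega,
    show J - j + 1 = J + 1 - j by omega]

theorem sum_pow_mul_one_add_pow_mul_choose_mul_choose_succ {R : Type*} [CommSemiring R]
    (m q : ℕ) (x : R) :
    ∑ j ∈ range (m + 1), x ^ j * (1 + x) ^ (m - j) * ((m.choose j * q.choose (j + 1) : ℕ) : R)
      = ∑ J ∈ range (m + 1), x ^ J * ((m.choose J * (J + q).choose (J + 1) : ℕ) : R) := by
  calc _ = ∑ j ∈ range (m + 1), ∑ i ∈ range (m + 1 - j),
        x ^ (j + i) * ((m.choose j * q.choose (j + 1) * (m - j).choose i : ℕ) : R) := by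
        refine sum_congr rfl fun j hj => ?_
        have hjm : j ≤ m := Nat.lt_succ_iff.mp (mem_range.mp hj)
        rw [add_comm 1 x, add_pow, mul_sum, sum_mul, show m - j + 1 = m + 1 - j by omega]
        refine sum_congr rfl fun i _ => ?_
        push_cast
        ring
    _ = ∑ J ∈ range (m + 1), ∑ j ∈ range (J + 1),
        x ^ (j + (J - j)) * ((m.choose j * q.choose (j + 1) * (m - j).choose (J - j) : ℕ) : R) :=
      (sum_range_diag_flip _ fun j i =>
        x ^ (j + i) * ((m.choose j * q.choose (j + 1) * (m - j).choose i : ℕ) : R)).symm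
    _ = _ := by
        refine sum_congr rfl fun J hJ => ?_
        have hJm : J ≤ m := Nat.lt_succ_iff.mp (mem_range.mp hJ)
        rw [← Nat.sum_range_choose_mul_choose_succ, mul_sum, Nat.cast_sum, mul_sum]
        refine sum_congr rfl fun j hj => ?_
        have hjJ : j ≤ J := Nat.lt_succ_iff.mp (mem_range.mp hj)
        rw [Nat.add_sub_cancel' hjJ, mul_right_comm, ← Nat.choose_mul hjJ]
        push_cast
        ring

theorem hyp2F1term_natCast_add_two_two (m p : ℕ) (z : ℝ) :
    hyp2F1term m (p + 2) 2 z = ((p : ℝ) + 1)⁻¹ *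
      ∑ j ∈ range (m + 1), (-z) ^ j * ((m.choose j * (j + (p + 1)).choose (j + 1) : ℕ) : ℝ) := by
  rw [hyp2F1term, mul_sum]
  refine sum_congr rfl fun j _ => ?_
  have hneg : (ascPochhammer ℝ j).eval (-(m : ℝ)) = (-1) ^ j * (j ! * m.choose j : ℕ) := by
    rw [ascPochhammer_eval_neg_eq_descPochhammer, descPochhammer_eval_eq_descFactorial,
      Nat.descFactorial_eq_factorial_mul_choose]
  have htwo : (ascPochhammer ℝ j).eval 2 = ((j + 1)! : ℕ) := by
    rw [← one_add_one_eq_two]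
    simpa [add_comm] using factorial_mul_ascPochhammer ℝ 1 j
  have hnum : (ascPochhammer ℝ j).eval ((p : ℝ) + 2) = (j + (p + 1))! / (p + 1)! := by
    rw [eq_div_iff (by positivity), mul_comm, add_comm j]
    exact_mod_cast factorial_mul_ascPochhammer ℝ (p + 1) j
  have hchoose : (((j + (p + 1)).choose (j + 1) * (j + 1)! * p ! : ℕ) : ℝ) = (j + (p + 1))! := by
    have h := Nat.choose_mul_factorial_mul_factorial (show j + 1 ≤ j + (p + 1) by omega)
    rw [show j + (p + 1) - (j + 1) = p by omega] at h
    exact_mod_cast h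
  rw [hneg, htwo, hnum, ← hchoose, Nat.factorial_succ p, neg_pow z]
  push_cast
  field_simp

theorem jacobiP_one (μ : ℝ) (m : ℕ) (x : ℝ) :
    jacobiP 1 μ m x = (m + 1) * hyp2F1term m (m + μ + 2) 2 ((1 - x) / 2) := by
  rw [jacobiP, show (m : ℝ) + 1 + 1 = (m + 1 : ℕ) + 1 by push_cast; ring,
    Real.Gamma_nat_eq_factorial, Real.Gamma_nat_eq_factorial, one_add_one_eq_two, Real.Gamma_two,
    Nat.factorial_succ]
  push_cast
  field_simp
  ring_nf

theorem sum_choose_mul_choose_eq_jacobiP_one (m p : ℕ) {z : ℝ} (hz : z ≠ 0) :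
    ∑ j ∈ range (m + 1), (-(1 - z) / z) ^ j * (1 / ((j : ℝ) + 1)) * m.choose j * p.choose j
      = (z ^ m)⁻¹ / (m + 1) * jacobiP 1 (p - m) m (2 * z - 1) := by
  have hterm : ∀ j ∈ range (m + 1),
      (-(1 - z) / z) ^ j * (1 / ((j : ℝ) + 1)) * m.choose j * p.choose j
        = ((p : ℝ) + 1)⁻¹ * (z ^ m)⁻¹ * ((z - 1) ^ j * (1 + (z - 1)) ^ (m - j) *
          ((m.choose j * (p + 1).choose (j + 1) : ℕ) : ℝ)) := by
    intro j hj
    have hjm : j ≤ m := Nat.lt_succ_iff.mp (mem_range.mp hj)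
    have hchoose : ((p : ℝ) + 1) * p.choose j = (p + 1).choose (j + 1) * ((j : ℝ) + 1) := by
      exact_mod_cast Nat.add_one_mul_choose_eq p j
    have hzm : z ^ m = z ^ (m - j) * z ^ j := by rw [← pow_add, Nat.sub_add_cancel hjm]
    rw [add_sub_cancel, hzm, neg_sub, div_pow]
    push_cast
    field_simp
    linear_combination (z - 1) ^ j * (m.choose j : ℝ) * hchoose
  rw [sum_congr rfl hterm, ← mul_sum, sum_pow_mul_one_add_pow_mul_choose_mul_choose_succ,
    jacobiP_one, show (m : ℝ) + (p - m) + 2 = p + 2 by ring,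
    show (1 - (2 * z - 1)) / 2 = -(z - 1) by ring, hyp2F1term_natCast_add_two_two]
  simp only [neg_neg, add_comm _ (p + 1)]
  field_simp

theorem jacobi_sum_identity_one_general
    (a : ℝ) (ha0 : 0 < a)
    (k n : ℕ) (hk : 1 ≤ k) (hkn : k ≤ n - 1) :
    ∑ γ ∈ Finset.Icc 1 k,
        (-(1 - a ^ 2) / a ^ 2) ^ (γ - 1) * (1 / (γ : ℝ)) *
          ((k - 1).choose (γ - 1) : ℝ) * ((n - k - 1).choose (γ - 1) : ℝ)
      = (a ^ (2 * (k - 1)))⁻¹ / (k : ℝ) *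
          jacobiP 1 ((n : ℝ) - 2 * (k : ℝ)) (k - 1) (2 * a ^ 2 - 1) := by
  obtain ⟨m, rfl⟩ : ∃ m, k = m + 1 := ⟨k - 1, by omega⟩
  obtain ⟨p, rfl⟩ : ∃ p, n = m + p + 2 := ⟨n - m - 2, by omega⟩
  have hμ : ((m + p + 2 : ℕ) : ℝ) - 2 * ((m + 1 : ℕ) : ℝ) = p - m := by push_cast; ring
  rw [← Finset.Ico_add_one_right_eq_Icc, Finset.sum_Ico_eq_sum_range,
    show m + p + 2 - (m + 1) - 1 = p by omega, hμ, pow_mul, Nat.add_sub_cancel, Nat.add_sub_cancel,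
    Nat.cast_add_one, ← sum_choose_mul_choose_eq_jacobiP_one m p (pow_ne_zero 2 ha0.ne')]
  refine sum_congr rfl fun j _ => ?_
  simp only [add_tsub_cancel_left, Nat.cast_add, Nat.cast_one, add_comm (1 : ℝ)]

theorem jacobi_sum_identity_one
    (a : ℝ) (ha0 : 0 < a) (ha1 : a < 1)
    (k n : ℕ) (hk : 1 ≤ k) (hkn : k ≤ n - 1) (hn : 1 ≤ n) :
    ∑ γ ∈ Finset.Icc 1 k,
        (-(1 - a ^ 2) / a ^ 2) ^ (γ - 1) * (1 / (γ : ℝ)) *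
          ((k - 1).choose (γ - 1) : ℝ) * ((n - k - 1).choose (γ - 1) : ℝ)
      = (a ^ (2 * (k - 1)))⁻¹ / (k : ℝ) *
          jacobiP 1 ((n : ℝ) - 2 * (k : ℝ)) (k - 1) (2 * a ^ 2 - 1) :=
  jacobi_sum_identity_one_general a ha0 k n hk hkn
end

section
/- For the discrete-time quantum walk on ℤ with coin U = [[a,b],[c,d]] ∈ U(2) and initial state φ = α|L⟩ + β|R⟩ (|α|² + |β|² = 1) starting from the origin, the probability of being at position n at time n is P_n^φ(n) = |a|^{2(n-1)} · (|b|²|α|² + |a|²|β|² - (aα·conj(bβ) + conj(aα)·bβ)) for n ≥ 1. -/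
open Matrix Complex ComplexConjugate

/-!
Only the second row of `Q = [[0, 0], [c, d]]` survives in its powers, so
`Q ^ n φ = (0, d ^ (n - 1) (c α + d β))`. For a unitary `2 × 2` matrix the moduli satisfy
`|d| = |a|`, `|c| = |b|`, and the columns are orthogonal, `a b̄ + c d̄ = 0`; expanding
`|c α + d β|²` with these relations gives the stated formula.
-/

lemma fin_two_zero_row_pow_succ_mulVec {R : Type*} [Semiring R] (c d x y : R) (k : ℕ) :
    (!![0, 0; c, d] ^ (k + 1)) *ᵥ ![x, y] = ![0, d ^ k * (c * x + d * y)] := by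
  induction k with
  | zero => ext i; fin_cases i <;> simp [mulVec, dotProduct]
  | succ k ih =>
    rw [pow_succ', ← mulVec_mulVec, ih]
    ext i; fin_cases i <;> simp [mulVec, dotProduct, pow_succ', mul_assoc]

section UnitaryFinTwo

variable {a b c d : ℂ}

lemma normSq_antidiag_of_unitary_fin_two
    (hU : (!![a, b; c, d] : Matrix (Fin 2) (Fin 2) ℂ) * (!![a, b; c, d])ᴴ = 1) :
    normSq c = normSq b ∧ normSq d = normSq a := by
  have hU' : (!![a, b; c, d] : Matrix (Fin 2) (Fin 2) ℂ)ᴴ * !![a, b; c, d] = 1 :=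
    mul_eq_one_comm.mp hU
  have hab := congrFun₂ hU 0 0
  have hcd := congrFun₂ hU 1 1
  have hac := congrFun₂ hU' 0 0
  simp only [mul_apply, Fin.sum_univ_two, of_apply, cons_val', cons_val_zero, cons_val_one,
    cons_val_fin_one, conjTranspose_apply, RCLike.star_def, mul_conj, one_apply_eq,
    mul_comm (conj _)] at hab hcd hac
  norm_cast at hab hcd hac
  constructor <;> linarith

lemma columns_orthogonal_of_unitary_fin_two
    (hU : (!![a, b; c, d] : Matrix (Fin 2) (Fin 2) ℂ) * (!![a, b; c, d])ᴴ = 1) :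
    a * conj b + c * conj d = 0 := by
  have hU' : (!![a, b; c, d] : Matrix (Fin 2) (Fin 2) ℂ)ᴴ * !![a, b; c, d] = 1 :=
    mul_eq_one_comm.mp hU
  simpa [mul_apply, Fin.sum_univ_two, mul_comm (conj _)] using congrFun₂ hU' 1 0

lemma norm_sq_second_row_mulVec_of_unitary_fin_two
    (hU : (!![a, b; c, d] : Matrix (Fin 2) (Fin 2) ℂ) * (!![a, b; c, d])ᴴ = 1) (α β : ℂ) :
    ‖c * α + d * β‖ ^ 2 = ‖b‖ ^ 2 * ‖α‖ ^ 2 + ‖a‖ ^ 2 * ‖β‖ ^ 2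
      - (a * α * conj (b * β) + conj (a * α) * (b * β)).re := by
  obtain ⟨hcb, hda⟩ := normSq_antidiag_of_unitary_fin_two hU
  have horth : c * α * conj (d * β) = -(a * α * conj (b * β)) := by
    simp only [map_mul]
    linear_combination (α * conj β) * columns_orthogonal_of_unitary_fin_two hU
  have hcross : conj (a * α) * (b * β) = conj (a * α * conj (b * β)) := by simp
  simp only [Complex.sq_norm, normSq_add, normSq_mul, hcb, hda, horth, hcross, add_conj, neg_re,
    ofReal_re]
  ring

end UnitaryFinTwo

theorem dtqw_prob_rightmost_general
    (a b c d α β : ℂ)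
    (hU : (!![a, b; c, d] : Matrix (Fin 2) (Fin 2) ℂ) * (!![a, b; c, d])ᴴ = 1)
    (n : ℕ) (hn : 1 ≤ n) :
    ∑ i, ‖
        ((((!![(0 : ℂ), 0; c, d] : Matrix (Fin 2) (Fin 2) ℂ) ^ n).mulVec ![α, β]) i)‖ ^ 2
      = ‖a‖ ^ (2 * (n - 1)) *
          (‖b‖ ^ 2 * ‖α‖ ^ 2 + ‖a‖ ^ 2 * ‖β‖ ^ 2
            - (a * α * (starRingEnd ℂ) (b * β) + (starRingEnd ℂ) (a * α) * (b * β)).re) := by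
  obtain ⟨k, rfl⟩ := Nat.exists_eq_add_of_le' hn
  have hda : ‖d‖ = ‖a‖ := by
    simp only [norm_def, (normSq_antidiag_of_unitary_fin_two hU).2]
  rw [fin_two_zero_row_pow_succ_mulVec, Fin.sum_univ_two,
    ← norm_sq_second_row_mulVec_of_unitary_fin_two hU]
  simp only [cons_val_zero, cons_val_one, norm_zero, norm_mul, norm_pow, hda, Nat.add_sub_cancel]
  ring

theorem dtqw_prob_rightmost
    (a b c d α β : ℂ)
    (hU : (!![a, b; c, d] : Matrix (Fin 2) (Fin 2) ℂ) * (!![a, b; c, d])ᴴ = 1)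
    (hφ : ‖α‖ ^ 2 + ‖β‖ ^ 2 = 1)
    (n : ℕ) (hn : 1 ≤ n) :
    ∑ i, ‖
        ((((!![(0 : ℂ), 0; c, d] : Matrix (Fin 2) (Fin 2) ℂ) ^ n).mulVec ![α, β]) i)‖ ^ 2
      = ‖a‖ ^ (2 * (n - 1)) *
          (‖b‖ ^ 2 * ‖α‖ ^ 2 + ‖a‖ ^ 2 * ‖β‖ ^ 2
            - (a * α * (starRingEnd ℂ) (b * β) + (starRingEnd ℂ) (a * α) * (b * β)).re) :=
  dtqw_prob_rightmost_general a b c d α β hU n hn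
end

section
/- The function f(x) = (|b| / (π(1-x²)√(|a|² - x²))) · (1 - c·x), restricted to (-|a|, |a|) with |a|² + |b|² = 1, 0 < |a| < 1, and constant c = |α|² - |β|² + (aα·conj(bβ) + conj(aα)·bβ)/|a|², is a probability density: ∫_{-|a|}^{|a|} f(x) dx = 1. -/
/-!
The weight `1 / ((1 - x²) √(r² - x²))` has the primitive
`arcsin (√(1 - r²) x / (r √(1 - x²))) / √(1 - r²)` (the substitution `x = r sin θ` turns the
integral into `∫ dθ / (1 - r² sin² θ)`). Unlike the more familiar arctangent form, this primitive
stays continuous up to `x = ±r`, where it takes the values `±π / (2√(1 - r²))`; as the weight is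
nonnegative, the fundamental theorem of calculus applies to the improper integral and gives
`π / √(1 - r²) = π / |b|`. The term `c x` of the density is odd and integrates to zero.
-/

open Real MeasureTheory Set

theorem intervalIntegral.integral_eq_zero_of_odd {E : Type*} [NormedAddCommGroup E]
    [NormedSpace ℝ E] {f : ℝ → E} (hf : ∀ x, f (-x) = -f x) (a : ℝ) :
    ∫ x in -a..a, f x = 0 := by
  have hneg := intervalIntegral.integral_comp_neg (a := -a) (b := a) f
  simp only [hf, intervalIntegral.integral_neg, neg_neg] at hneg
  have h2 : (2 : ℝ) • ∫ x in -a..a, f x = 0 := by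
    rw [two_smul]
    nth_rewrite 1 [← hneg]
    exact neg_add_cancel _
  simpa using h2

noncomputable def konnoWeight (r x : ℝ) : ℝ := 1 / ((1 - x ^ 2) * √(r ^ 2 - x ^ 2))

noncomputable def konnoWeightPrimitive (r y : ℝ) : ℝ :=
  arcsin (√(1 - r ^ 2) * y / (r * √(1 - y ^ 2))) / √(1 - r ^ 2)

section

variable {r : ℝ}

theorem konnoWeight_nonneg {x : ℝ} (hx : x ^ 2 ≤ 1) : 0 ≤ konnoWeight r x := by
  unfold konnoWeight
  have : 0 ≤ 1 - x ^ 2 := by linarith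
  positivity

theorem konnoWeightPrimitive_neg (y : ℝ) :
    konnoWeightPrimitive r (-y) = -konnoWeightPrimitive r y := by
  simp only [konnoWeightPrimitive, neg_sq, mul_neg, neg_div, arcsin_neg]

theorem konnoWeightPrimitive_self (h0 : 0 < r) (h1 : r < 1) :
    konnoWeightPrimitive r r = π / 2 / √(1 - r ^ 2) := by
  have hk : 0 < √(1 - r ^ 2) := sqrt_pos.2 (by nlinarith)
  rw [konnoWeightPrimitive, mul_comm (√(1 - r ^ 2)), div_self (by positivity), arcsin_one]

theorem continuousOn_konnoWeightPrimitive (h0 : 0 < r) (h1 : r < 1) :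
    ContinuousOn (konnoWeightPrimitive r) (Icc (-r) r) := by
  refine (continuous_arcsin.comp_continuousOn (ContinuousOn.div (by fun_prop) (by fun_prop)
    fun y hy => ?_)).div_const _
  have : 0 < 1 - y ^ 2 := by nlinarith [hy.1, hy.2]
  positivity

theorem hasDerivAt_konnoWeightPrimitive (h0 : 0 < r) (h1 : r < 1) {x : ℝ}
    (hx : x ∈ Ioo (-r) r) : HasDerivAt (konnoWeightPrimitive r) (konnoWeight r x) x := by
  obtain ⟨hxl, hxr⟩ := hx
  have hk2 : 0 < 1 - r ^ 2 := by nlinarith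
  have hs2 : 0 < 1 - x ^ 2 := by nlinarith
  have ht2 : 0 < r ^ 2 - x ^ 2 := by nlinarith
  have hk : 0 < √(1 - r ^ 2) := sqrt_pos.2 hk2
  have hs : 0 < √(1 - x ^ 2) := sqrt_pos.2 hs2
  have ht : 0 < √(r ^ 2 - x ^ 2) := sqrt_pos.2 ht2
  have hkk := sq_sqrt hk2.le
  have hss := sq_sqrt hs2.le
  have htt := sq_sqrt ht2.le
  have hu : 1 - (√(1 - r ^ 2) * x / (r * √(1 - x ^ 2))) ^ 2
      = (√(r ^ 2 - x ^ 2) / (r * √(1 - x ^ 2))) ^ 2 := by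
    field_simp
    linear_combination (-x ^ 2) * hkk + r ^ 2 * hss - htt
  have hu1 : (√(1 - r ^ 2) * x / (r * √(1 - x ^ 2))) ^ 2 < 1 := by
    nlinarith [show 0 < (√(r ^ 2 - x ^ 2) / (r * √(1 - x ^ 2))) ^ 2 by positivity]
  have hden : HasDerivAt (fun y => r * √(1 - y ^ 2)) (r * (-(2 * x) / (2 * √(1 - x ^ 2)))) x :=
    (((hasDerivAt_pow 2 x).const_sub 1).sqrt hs2.ne').const_mul r |>.congr_deriv (by simp)
  have hnum : HasDerivAt (fun y => √(1 - r ^ 2) * y) √(1 - r ^ 2) x := by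
    simpa using (hasDerivAt_id x).const_mul √(1 - r ^ 2)
  have hquot : HasDerivAt (fun y => √(1 - r ^ 2) * y / (r * √(1 - y ^ 2))) _ x :=
    hnum.div hden (by positivity)
  refine (((hasDerivAt_arcsin (by nlinarith) (by nlinarith)).comp x hquot).div_const
    √(1 - r ^ 2)).congr_deriv ?_
  -- The arcsine factor `1 / √(1 - u²)` is `r √(1 - x²) / √(r² - x²)`.
  rw [hu, sqrt_sq (by positivity), konnoWeight]
  field_simp
  linear_combination (-x ^ 2) * hss

theorem intervalIntegrable_konnoWeight (h0 : 0 < r) (h1 : r < 1) :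
    IntervalIntegrable (konnoWeight r) volume (-r) r :=
  (intervalIntegrable_iff_integrableOn_Ioc_of_le (by linarith)).2 <|
    intervalIntegral.integrableOn_deriv_of_nonneg (continuousOn_konnoWeightPrimitive h0 h1)
      (fun _ hx => hasDerivAt_konnoWeightPrimitive h0 h1 hx)
      (fun _ hx => konnoWeight_nonneg (by nlinarith [hx.1, hx.2]))

theorem integral_konnoWeight (h0 : 0 < r) (h1 : r < 1) :
    ∫ x in -r..r, konnoWeight r x = π / √(1 - r ^ 2) := by
  rw [intervalIntegral.integral_eq_sub_of_hasDerivAt_of_le (by linarith)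
      (continuousOn_konnoWeightPrimitive h0 h1)
      (fun _ hx => hasDerivAt_konnoWeightPrimitive h0 h1 hx) (intervalIntegrable_konnoWeight h0 h1),
    konnoWeightPrimitive_neg, konnoWeightPrimitive_self h0 h1]
  ring

theorem integral_mul_konnoWeight : ∫ x in -r..r, x * konnoWeight r x = 0 :=
  intervalIntegral.integral_eq_zero_of_odd (fun x => by simp [konnoWeight]) r

theorem integral_konnoDensity (h0 : 0 < r) (h1 : r < 1) (c : ℝ) :
    ∫ x in Ioo (-r) r, √(1 - r ^ 2) * (1 - c * x) / (π * (1 - x ^ 2) * √(r ^ 2 - x ^ 2)) = 1 := by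
  have hw := intervalIntegrable_konnoWeight h0 h1
  have hsplit : ∀ x, √(1 - r ^ 2) * (1 - c * x) / (π * (1 - x ^ 2) * √(r ^ 2 - x ^ 2))
      = √(1 - r ^ 2) / π * konnoWeight r x - √(1 - r ^ 2) * c / π * (x * konnoWeight r x) := by
    intro x
    simp only [konnoWeight, div_eq_mul_inv, mul_inv, one_mul]
    ring
  have hk : 0 < √(1 - r ^ 2) := sqrt_pos.2 (by nlinarith)
  rw [← integral_Ioc_eq_integral_Ioo, ← intervalIntegral.integral_of_le (by linarith)]
  simp_rw [hsplit]
  rw [intervalIntegral.integral_sub (hw.const_mul _)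
      ((hw.continuousOn_mul (g := fun x => x) continuousOn_id).const_mul _),
    intervalIntegral.integral_const_mul, intervalIntegral.integral_const_mul,
    integral_konnoWeight h0 h1, integral_mul_konnoWeight, mul_zero, sub_zero]
  field_simp

end

theorem konno_density_integral_one_general
    (a b α β : ℂ)
    (hab : ‖a‖ ^ 2 + ‖b‖ ^ 2 = 1)
    (ha0 : 0 < ‖a‖) (ha1 : ‖a‖ < 1) :
    ∫ x in Set.Ioo (-(‖a‖)) (‖a‖),
        ‖b‖ *
          (1 - (‖α‖ ^ 2 - ‖β‖ ^ 2 +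
            (a * α * (starRingEnd ℂ) (b * β) + (starRingEnd ℂ) (a * α) * (b * β)).re
              / ‖a‖ ^ 2) * x) /
        (Real.pi * (1 - x ^ 2) * Real.sqrt (‖a‖ ^ 2 - x ^ 2)) = 1 := by
  have hb : ‖b‖ = √(1 - ‖a‖ ^ 2) := by rw [← hab, add_sub_cancel_left, sqrt_sq (norm_nonneg b)]
  rw [hb]
  exact integral_konnoDensity ha0 ha1 _

theorem konno_density_integral_one
    (a b α β : ℂ)
    (hab : ‖a‖ ^ 2 + ‖b‖ ^ 2 = 1)
    (ha0 : 0 < ‖a‖) (ha1 : ‖a‖ < 1)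
    (habne : a * b ≠ 0)
    (hφ : ‖α‖ ^ 2 + ‖β‖ ^ 2 = 1) :
    ∫ x in Set.Ioo (-(‖a‖)) (‖a‖),
        ‖b‖ *
          (1 - (‖α‖ ^ 2 - ‖β‖ ^ 2 +
            (a * α * (starRingEnd ℂ) (b * β) + (starRingEnd ℂ) (a * α) * (b * β)).re
              / ‖a‖ ^ 2) * x) /
        (Real.pi * (1 - x ^ 2) * Real.sqrt (‖a‖ ^ 2 - x ^ 2)) = 1 :=
  konno_density_integral_one_general a b α β hab ha0 ha1
end
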